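/- Let V be a d×d positive definite matrix, and for t = 1,…,n let X_t be d×m_t matrices with V_0 = V and V_t = V_{t-1} + X_t X_tᵀ. If det(V) > 0, then ∏_{t=1}^n (1 + tr(X_tᵀ V_{t-1}⁻¹ X_t)) ≤ det(V_n)/det(V). -/

import Mathlib

/-!
Writing `W_{t+1} = W_t + X_t X_tᵀ = W_t (1 + W_t⁻¹ X_t X_tᵀ)` and applying the
Weinstein–Aronszajn identity gives `det W_{t+1} = det W_t · det (1 + X_tᵀ W_t⁻¹ X_t)`. The matrix
`A = X_tᵀ W_t⁻¹ X_t` is positive semidefinite, so with eigenvalues `λ_i ≥ 0`,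
`det (1 + A) = ∏ (1 + λ_i) ≥ 1 + ∑ λ_i = 1 + tr A`. Telescoping over `t` gives the bound.
-/

open Matrix Finset

theorem Finset.one_add_sum_le_prod_one_add {ι R : Type*} [CommSemiring R] [PartialOrder R]
    [IsOrderedRing R] (s : Finset ι) {f : ι → R} (hf : ∀ i ∈ s, 0 ≤ f i) :
    1 + ∑ i ∈ s, f i ≤ ∏ i ∈ s, (1 + f i) := by
  classical
  induction s using Finset.induction_on with
  | empty => simp
  | insert a s ha ih =>
    rw [sum_insert ha, prod_insert ha]
    have hfa : 0 ≤ f a := hf a (mem_insert_self a s)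
    have hs : ∀ i ∈ s, 0 ≤ f i := fun i hi => hf i (mem_insert_of_mem hi)
    calc 1 + (f a + ∑ i ∈ s, f i) ≤ (1 + f a) * (1 + ∑ i ∈ s, f i) :=
          (le_add_of_nonneg_right (mul_nonneg hfa (sum_nonneg hs))).trans_eq (by ring)
      _ ≤ (1 + f a) * ∏ i ∈ s, (1 + f i) :=
          mul_le_mul_of_nonneg_left (ih hs) (add_nonneg zero_le_one hfa)

namespace Matrix

variable {n : Type*} [Fintype n]

theorem PosDef.add_mul_transpose {W : Matrix n n ℝ} (hW : W.PosDef) {m : Type*} [Fintype m]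
    (X : Matrix n m ℝ) : (W + X * Xᵀ).PosDef := by
  simpa using hW.add_posSemidef (posSemidef_self_mul_conjTranspose X)

variable [DecidableEq n]

theorem IsHermitian.det_one_add {A : Matrix n n ℝ} (hA : A.IsHermitian) :
    (1 + A).det = ∏ i, (1 + hA.eigenvalues i) := by
  set U := hA.eigenvectorUnitary
  have hconj : 1 + A = Unitary.conjStarAlgAut ℝ _ U (diagonal fun i => 1 + hA.eigenvalues i) := by
    conv_lhs => rw [hA.spectral_theorem, ← map_one (Unitary.conjStarAlgAut ℝ _ U), ← map_add]
    rw [← diagonal_one, diagonal_add]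
    rfl
  rw [hconj, Unitary.conjStarAlgAut_apply, det_mul, det_mul, mul_right_comm, ← det_mul,
    Unitary.mul_star_self_of_mem U.2, det_one, one_mul, det_diagonal]

theorem PosSemidef.one_add_trace_le_det_one_add {A : Matrix n n ℝ} (hA : A.PosSemidef) :
    1 + A.trace ≤ (1 + A).det := by
  rw [hA.isHermitian.det_one_add, hA.isHermitian.trace_eq_sum_eigenvalues]
  exact one_add_sum_le_prod_one_add _ fun i _ => hA.eigenvalues_nonneg i

theorem PosDef.posSemidef_transpose_mul_inv_mul {W : Matrix n n ℝ} (hW : W.PosDef)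
    {m : Type*} [Fintype m] (X : Matrix n m ℝ) : (Xᵀ * W⁻¹ * X).PosSemidef := by
  simpa using hW.inv.posSemidef.conjTranspose_mul_mul_same X

theorem PosDef.det_mul_one_add_trace_le_det_add {W : Matrix n n ℝ} (hW : W.PosDef)
    {m : Type*} [Fintype m] [DecidableEq m] (X : Matrix n m ℝ) :
    W.det * (1 + (Xᵀ * W⁻¹ * X).trace) ≤ (W + X * Xᵀ).det := by
  rw [det_add_mul X Xᵀ hW.det_pos.ne'.isUnit]
  exact mul_le_mul_of_nonneg_left
    (hW.posSemidef_transpose_mul_inv_mul X).one_add_trace_le_det_one_add hW.det_pos.le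

end Matrix

theorem stmt11_general (d n : ℕ) (V : Matrix (Fin d) (Fin d) ℝ) (hV : V.PosDef)
    (m : ℕ → ℕ) (X : (t : ℕ) → Matrix (Fin d) (Fin (m t)) ℝ)
    (W : ℕ → Matrix (Fin d) (Fin d) ℝ)
    (hW0 : W 0 = V)
    (hW : ∀ t, W (t + 1) = W t + X t * (X t)ᵀ) :
    ∏ t ∈ Finset.range n, (1 + ((X t)ᵀ * (W t)⁻¹ * X t).trace) ≤ (W n).det / V.det := by
  have hWpd : ∀ t, (W t).PosDef := by
    intro t
    induction t with
    | zero => rwa [hW0]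
    | succ t ih => rw [hW t]; exact ih.add_mul_transpose (X t)
  have htelescope : ∀ k,
      V.det * ∏ t ∈ range k, (1 + ((X t)ᵀ * (W t)⁻¹ * X t).trace) ≤ (W k).det := by
    intro k
    induction k with
    | zero => simp [hW0]
    | succ k ih =>
      rw [prod_range_succ, ← mul_assoc, hW k]
      have htr : 0 ≤ ((X k)ᵀ * (W k)⁻¹ * X k).trace :=
        ((hWpd k).posSemidef_transpose_mul_inv_mul (X k)).trace_nonneg
      exact (mul_le_mul_of_nonneg_right ih (by linarith)).trans
        ((hWpd k).det_mul_one_add_trace_le_det_add (X k))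
  rw [le_div_iff₀ hV.det_pos, mul_comm]
  exact htelescope n

theorem stmt11 (d n : ℕ) (V : Matrix (Fin d) (Fin d) ℝ) (hV : V.PosDef)
    (m : ℕ → ℕ) (X : (t : ℕ) → Matrix (Fin d) (Fin (m t)) ℝ)
    (W : ℕ → Matrix (Fin d) (Fin d) ℝ)
    (hW0 : W 0 = V)
    (hW : ∀ t, W (t + 1) = W t + X t * (X t)ᵀ)
    (hdet : 0 < V.det) :
    ∏ t ∈ Finset.range n, (1 + ((X t)ᵀ * (W t)⁻¹ * X t).trace) ≤ (W n).det / V.det :=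
  stmt11_general d n V hV m X W hW0 hW
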